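/- Let g₁, g₂ be bijective isometries of H² and z₁, z₂ ∈ H² such that for i = 1, 2 the displacement d(zᵢ, gᵢ(zᵢ)) is positive and equals the infimum over all w ∈ H² of d(w, gᵢ(w)) (i.e., each gᵢ is hyperbolic and zᵢ lies on its invariant axis). Let γ(x₁,x₂) = (g₁(x₁), g₂(x₂)) and 𝐳 = (z₁,z₂). Then the Dirichlet domain of the cyclic group ⟨γ⟩ with basepoint 𝐳 is two-faced: for every 𝐰 in the bidisk with ρ(𝐰,𝐳) ≤ ρ(𝐰,γ(𝐳)) and ρ(𝐰,𝐳) ≤ ρ(𝐰,γ⁻¹(𝐳)), one has ρ(𝐰,𝐳) ≤ ρ(𝐰,γⁿ(𝐳)) for every integer n. -/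

import Mathlib

open UpperHalfPlane

noncomputable section

/-- The bidisk `ℍ × ℍ` with the `ℓ²` product metric. -/
abbrev Bidisk : Type := WithLp 2 (UpperHalfPlane × UpperHalfPlane)

/-- Package a pair of points of `ℍ` as a point of the bidisk. -/
def toBD (p : UpperHalfPlane × UpperHalfPlane) : Bidisk := (WithLp.equiv 2 _).symm p

/-!
In `ℍ` the median formula `cosh d(w,x) + cosh d(w,y) = 2 cosh d(w,m) cosh (d(x,y)/2)`, for `m`
the midpoint of `x` and `y`, makes distance convex along geodesics:
`2 d(w,m) ≤ d(w,x) + d(w,y)`. For a hyperbolic isometry `g` with `z` on its axis this forces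
`d(z, g² z) = 2 d(z, g z)`, so each `gⁿ z` is the midpoint of its two neighbours in the orbit
and `n ↦ d(w, gⁿ z)` is a convex sequence. Then so is `n ↦ ρ(𝐰, γⁿ 𝐳)²`, a sum of squares of
such sequences, and a convex sequence on `ℤ` with `c 0 ≤ c 1` and `c 0 ≤ c (-1)` is minimal at `0`.
-/

section MetricMidpoint

variable {X Y : Type*} [PseudoMetricSpace X] [PseudoMetricSpace Y]

def IsMetricMidpoint (x y m : X) : Prop :=
  dist x m = dist x y / 2 ∧ dist m y = dist x y / 2

lemma IsMetricMidpoint.map {x y m : X} (h : IsMetricMidpoint x y m) {f : X → Y}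
    (hf : Isometry f) : IsMetricMidpoint (f x) (f y) (f m) := by
  simpa only [IsMetricMidpoint, hf.dist_eq] using h

variable (hconv : ∀ x y m w : X, IsMetricMidpoint x y m → 2 * dist w m ≤ dist w x + dist w y)
include hconv

/-- A point of minimal displacement lies on an axis: `z`, `g z` and `g (g z)` are aligned. -/
lemma dist_apply_apply_eq_two_mul (g : X ≃ᵢ X) {z m : X}
    (hmin : ∀ w, dist z (g z) ≤ dist w (g w)) (hm : IsMetricMidpoint z (g z) m) :
    dist z (g (g z)) = 2 * dist z (g z) := by
  have hgm := hm.map g.isometry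
  have hgz : dist (g z) (g (g z)) = dist z (g z) := g.dist_eq z (g z)
  have h₁ := hconv _ _ _ m hgm
  have h₂ := hconv _ _ _ (g (g z)) hm
  rw [hm.2] at h₁
  rw [dist_comm (g (g z)) (g z), hgz, dist_comm (g (g z)) z, dist_comm (g (g z)) m] at h₂
  have := hmin m
  have := dist_triangle z (g z) (g (g z))
  linarith

lemma two_mul_dist_zpow_le (g : X ≃ᵢ X) {z m : X}
    (hmin : ∀ w, dist z (g z) ≤ dist w (g w)) (hm : IsMetricMidpoint z (g z) m) (n : ℤ) (w : X) :
    2 * dist w ((g ^ n) z) ≤ dist w ((g ^ (n - 1)) z) + dist w ((g ^ (n + 1)) z) := by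
  have hz : IsMetricMidpoint z (g (g z)) (g z) := by
    rw [IsMetricMidpoint, dist_apply_apply_eq_two_mul hconv g hmin hm, g.dist_eq]
    constructor <;> ring
  have hn : g ^ n = g ^ (n - 1) * g := by rw [← zpow_add_one, sub_add_cancel]
  have hn' : g ^ (n + 1) = g ^ (n - 1) * g * g := by
    rw [← zpow_add_one, ← zpow_add_one, sub_add_cancel]
  rw [hn, hn']
  exact hconv _ _ _ w (hz.map (g ^ (n - 1)).isometry)

end MetricMidpoint

lemma monotone_natCast_of_two_mul_le_add {c : ℤ → ℝ}
    (hconv : ∀ n, 2 * c n ≤ c (n - 1) + c (n + 1)) (h₁ : c 0 ≤ c 1) :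
    Monotone fun k : ℕ => c k := by
  refine monotone_nat_of_le_succ fun k => ?_
  induction k with
  | zero => simpa using h₁
  | succ k ih =>
    have := hconv (k + 1)
    push_cast at ih ⊢ this
    rw [add_sub_cancel_right] at this
    linarith

lemma apply_zero_le_of_two_mul_le_add {c : ℤ → ℝ}
    (hconv : ∀ n, 2 * c n ≤ c (n - 1) + c (n + 1)) (h₁ : c 0 ≤ c 1) (hneg : c 0 ≤ c (-1))
    (n : ℤ) : c 0 ≤ c n := by
  have hconv' (n : ℤ) : 2 * c (-n) ≤ c (-(n - 1)) + c (-(n + 1)) := by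
    rw [neg_sub', sub_neg_eq_add, neg_add', add_comm]
    exact hconv (-n)
  obtain ⟨k, rfl | rfl⟩ := Int.eq_nat_or_neg n
  · simpa using monotone_natCast_of_two_mul_le_add hconv h₁ k.zero_le
  · simpa using monotone_natCast_of_two_mul_le_add (c := fun n => c (-n)) hconv'
      (by simpa using hneg) k.zero_le

lemma two_mul_sq_le_sq_add_sq {x a b : ℝ} (hx : 0 ≤ x) (h : 2 * x ≤ a + b) :
    2 * x ^ 2 ≤ a ^ 2 + b ^ 2 := by
  nlinarith [sq_nonneg (a - b)]

lemma Real.two_mul_cosh_half_sq (x : ℝ) : 2 * cosh (x / 2) ^ 2 = cosh x + 1 := by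
  have := cosh_two_mul (x / 2)
  rw [mul_div_cancel₀ x two_ne_zero] at this
  linarith [cosh_sq (x / 2)]

namespace UpperHalfPlane

open Real

lemma cosh_dist_mul (z w : ℍ) :
    cosh (dist z w) * (2 * z.im * w.im) =
      2 * z.im * w.im + ((z.re - w.re) ^ 2 + (z.im - w.im) ^ 2) := by
  have : 0 < 2 * z.im * w.im := by have := z.im_pos; have := w.im_pos; positivity
  rw [cosh_dist, Complex.dist_eq_re_im, sq_sqrt (by positivity), add_mul,
    div_mul_cancel₀ _ this.ne']
  simp only [coe_re, coe_im]
  ring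

def hypMidpoint (x y : ℍ) : ℍ :=
  mk ⟨(x.re * y.im + y.re * x.im) / (x.im + y.im),
    2 * cosh (dist x y / 2) * x.im * y.im / (x.im + y.im)⟩
    (by have := x.im_pos; have := y.im_pos; dsimp only; positivity)

lemma hypMidpoint_comm (x y : ℍ) : hypMidpoint x y = hypMidpoint y x := by
  ext1
  simp only [hypMidpoint, coe_mk, dist_comm x y]
  ring_nf

lemma cosh_dist_add_cosh_dist (x y w : ℍ) :
    cosh (dist w x) + cosh (dist w y) =
      2 * cosh (dist w (hypMidpoint x y)) * cosh (dist x y / 2) := by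
  have hx := x.im_pos
  have hy := y.im_pos
  have hw := w.im_pos
  set t := cosh (dist x y / 2)
  have ht : (2 * t) ^ 2 * (x.im * y.im) =
      4 * (x.im * y.im) + ((x.re - y.re) ^ 2 + (x.im - y.im) ^ 2) := by
    linear_combination 2 * x.im * y.im * two_mul_cosh_half_sq (dist x y) + cosh_dist_mul x y
  set S := x.im + y.im
  have hS : 0 < S := by positivity
  have hm : cosh (dist w (hypMidpoint x y)) * (2 * w.im * (2 * t) * x.im * y.im * S) =
      2 * w.im * (2 * t) * x.im * y.im * S + (w.re * S - (x.re * y.im + y.re * x.im)) ^ 2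
        + (w.im * S - 2 * t * x.im * y.im) ^ 2 := by
    have h := cosh_dist_mul w (hypMidpoint x y)
    have hre : (hypMidpoint x y).re = (x.re * y.im + y.re * x.im) / S := rfl
    have him : (hypMidpoint x y).im = 2 * t * x.im * y.im / S := rfl
    rw [hre, him] at h
    field_simp at h
    linear_combination h
  have key : (cosh (dist w x) + cosh (dist w y) - cosh (dist w (hypMidpoint x y)) * (2 * t))
      * (2 * w.im * (2 * t) * x.im * y.im * S ^ 2) = 0 := by
    linear_combination (2 * t) * y.im * S ^ 2 * cosh_dist_mul w x
      + (2 * t) * x.im * S ^ 2 * cosh_dist_mul w y - (2 * t) * S * hm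
      - (2 * t) * x.im * y.im * S * ht
  have : 0 < t := cosh_pos _
  have := (mul_eq_zero.mp key).resolve_right (by positivity)
  linarith

lemma dist_hypMidpoint_left (x y : ℍ) : dist x (hypMidpoint x y) = dist x y / 2 := by
  have h := cosh_dist_add_cosh_dist x y x
  rw [dist_self, cosh_zero, add_comm, ← two_mul_cosh_half_sq, sq] at h
  refine cosh_injOn dist_nonneg (by positivity : 0 ≤ dist x y / 2) ?_
  nlinarith [cosh_pos (dist x y / 2)]

lemma isMetricMidpoint_hypMidpoint (x y : ℍ) : IsMetricMidpoint x y (hypMidpoint x y) := by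
  refine ⟨dist_hypMidpoint_left x y, ?_⟩
  rw [hypMidpoint_comm, dist_comm, dist_comm x y]
  exact dist_hypMidpoint_left y x

lemma IsMetricMidpoint.eq_hypMidpoint {x y m : ℍ} (h : IsMetricMidpoint x y m) :
    m = hypMidpoint x y := by
  have hc := cosh_dist_add_cosh_dist x y m
  rw [dist_comm m x, h.1, h.2] at hc
  refine dist_eq_zero.mp (cosh_injOn dist_nonneg (Set.mem_Ici.2 le_rfl) ?_)
  nlinarith [cosh_pos (dist x y / 2), cosh_zero]

lemma two_mul_dist_le_of_isMetricMidpoint {x y m : ℍ} (h : IsMetricMidpoint x y m) (w : ℍ) :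
    2 * dist w m ≤ dist w x + dist w y := by
  have hc := cosh_dist_add_cosh_dist x y w
  rw [← h.eq_hypMidpoint] at hc
  set a := dist w x
  set b := dist w y
  have hab : |(a - b) / 2| ≤ |dist x y / 2| := by
    rw [abs_div, abs_two, abs_of_nonneg (by positivity : 0 ≤ dist x y / 2)]
    have := abs_dist_sub_le x y w
    rw [dist_comm x w, dist_comm y w] at this
    linarith
  have hsum : cosh a + cosh b = 2 * cosh ((a + b) / 2) * cosh ((a - b) / 2) := by
    have h₁ := cosh_add ((a + b) / 2) ((a - b) / 2)
    have h₂ := cosh_sub ((a + b) / 2) ((a - b) / 2)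
    ring_nf at h₁ h₂ ⊢
    linarith
  have hle : cosh (dist w m) ≤ cosh ((a + b) / 2) := by
    have := cosh_le_cosh.mpr hab
    have := cosh_pos ((a + b) / 2)
    nlinarith [cosh_pos (dist x y / 2)]
  rw [cosh_le_cosh, abs_of_nonneg dist_nonneg,
    abs_of_nonneg (by positivity : 0 ≤ (a + b) / 2)] at hle
  linarith

lemma two_mul_dist_zpow_le_of_eq_iInf (g : ℍ ≃ᵢ ℍ) {z : ℍ}
    (hmin : dist z (g z) = ⨅ w, dist w (g w)) (n : ℤ) (w : ℍ) :
    2 * dist w ((g ^ n) z) ≤ dist w ((g ^ (n - 1)) z) + dist w ((g ^ (n + 1)) z) :=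
  two_mul_dist_zpow_le (fun _ _ _ w h => two_mul_dist_le_of_isMetricMidpoint h w) g
    (fun w => hmin ▸ ciInf_le ⟨0, Set.forall_mem_range.2 fun _ => dist_nonneg⟩ w)
    (isMetricMidpoint_hypMidpoint z (g z)) n w

end UpperHalfPlane

lemma dist_toBD (w : Bidisk) (a b : ℍ) :
    dist w (toBD (a, b)) = √(dist w.fst a ^ 2 + dist w.snd b ^ 2) := by
  rw [WithLp.prod_dist_eq_add (by simp), ENNReal.toReal_ofNat, Real.rpow_two, Real.rpow_two,
    Real.sqrt_eq_rpow, one_div]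
  rfl

theorem dirichlet_domain_two_faced
    (g₁ g₂ : UpperHalfPlane ≃ᵢ UpperHalfPlane) (z₁ z₂ : UpperHalfPlane)
    (h₁min : dist z₁ (g₁ z₁) = ⨅ w : UpperHalfPlane, dist w (g₁ w))
    (h₂min : dist z₂ (g₂ z₂) = ⨅ w : UpperHalfPlane, dist w (g₂ w)) :
    ∀ w : Bidisk,
      dist w (toBD (z₁, z₂)) ≤ dist w (toBD (g₁ z₁, g₂ z₂)) →
      dist w (toBD (z₁, z₂)) ≤ dist w (toBD (g₁.symm z₁, g₂.symm z₂)) →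
      ∀ n : ℤ, dist w (toBD (z₁, z₂)) ≤ dist w (toBD ((g₁ ^ n) z₁, (g₂ ^ n) z₂)) := by
  intro w hw₁ hwinv n
  set c : ℤ → ℝ := fun k => dist w.fst ((g₁ ^ k) z₁) ^ 2 + dist w.snd ((g₂ ^ k) z₂) ^ 2
  have hρ (k : ℤ) : dist w (toBD ((g₁ ^ k) z₁, (g₂ ^ k) z₂)) = √(c k) := dist_toBD _ _ _
  have hconv (k : ℤ) : 2 * c k ≤ c (k - 1) + c (k + 1) := by
    have := two_mul_sq_le_sq_add_sq dist_nonneg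
      (two_mul_dist_zpow_le_of_eq_iInf g₁ h₁min k w.fst)
    have := two_mul_sq_le_sq_add_sq dist_nonneg
      (two_mul_dist_zpow_le_of_eq_iInf g₂ h₂min k w.snd)
    simp only [c]
    linarith
  have hsqrt {k l : ℤ} (h : √(c k) ≤ √(c l)) : c k ≤ c l :=
    (Real.sqrt_le_sqrt_iff (by positivity)).mp h
  have hzero : dist w (toBD (z₁, z₂)) = √(c 0) := by simpa using hρ 0
  have h₁ : c 0 ≤ c 1 := hsqrt (by rw [← hzero, ← hρ 1]; simpa using hw₁)
  have hneg : c 0 ≤ c (-1) :=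
    hsqrt (by rw [← hzero, ← hρ (-1), zpow_neg_one, zpow_neg_one]; exact hwinv)
  rw [hzero, hρ n]
  exact Real.sqrt_le_sqrt (apply_zero_le_of_two_mul_le_add hconv h₁ hneg n)
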